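/- arXiv:1902.00137 — 5 statements merged into one kernel-verified Lean document; each statement's English description precedes it below -/
import Mathlib

section
/- For any real q > 0, the function f(x) = -x·ln_q(x) is strictly concave on the positive reals, where ln_q(x) = log(x) if q = 1 and ln_q(x) = (x^(q-1) - 1)/(q-1) if q ≠ 1. -/
open Real Finset

noncomputable def qlog (q x : ℝ) : ℝ :=
  if q = 1 then Real.log x else (x ^ (q - 1) - 1) / (q - 1)

noncomputable def qexp (q x : ℝ) : ℝ :=
  if q = 1 then Real.exp x else (max (1 + (q - 1) * x) 0) ^ (1 / (q - 1))

/-- The summand `-p · ln_q p` with the convention `0 · ln_q 0 = 0`. -/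
noncomputable def entTerm (q p : ℝ) : ℝ := if p = 0 then 0 else -p * qlog q p

def IsPmf {X : Type*} [Fintype X] (P : X → ℝ) : Prop :=
  (∀ x, 0 ≤ P x) ∧ ∑ x, P x = 1

/-- Tsallis entropy. -/
noncomputable def Sq {X : Type*} [Fintype X] (q : ℝ) (P : X → ℝ) : ℝ :=
  ∑ x, entTerm q (P x)

/-- The q-maximum operator. -/
noncomputable def qmax {X : Type*} [Fintype X] (q : ℝ) (f : X → ℝ) : ℝ :=
  sSup {y | ∃ P : X → ℝ, IsPmf P ∧ y = (∑ x, P x * f x) + Sq q P}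

private lemma sc_congr {s : Set ℝ} {f g : ℝ → ℝ} (h : StrictConcaveOn ℝ s f)
    (hfg : ∀ x ∈ s, f x = g x) : StrictConcaveOn ℝ s g := by
  refine ⟨h.1, fun x hx y hy hxy a b ha hb hab => ?_⟩
  rw [← hfg x hx, ← hfg y hy, ← hfg _ (h.1 hx hy ha.le hb.le hab)]
  exact h.2 hx hy hxy ha hb hab

private lemma sc_smul {s : Set ℝ} {f : ℝ → ℝ} {c : ℝ} (hc : 0 < c)
    (h : StrictConcaveOn ℝ s f) : StrictConcaveOn ℝ s (fun x => c * f x) := by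
  refine ⟨h.1, fun x hx y hy hxy a b ha hb hab => ?_⟩
  have := h.2 hx hy hxy ha hb hab
  have := mul_lt_mul_of_pos_left this hc
  calc a • (c * f x) + b • (c * f y) = c * (a • f x + b • f y) := by
        simp [smul_eq_mul]; ring
    _ < c * f (a • x + b • y) := this

theorem stmt0 (q : ℝ) (hq : 0 < q) :
    StrictConcaveOn ℝ (Set.Ioi (0 : ℝ)) (fun x : ℝ => -x * qlog q x) := by
  rcases eq_or_ne q 1 with rfl | hq1
  · refine sc_congr ((Real.strictConcaveOn_negMulLog).subset Set.Ioi_subset_Ici_self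
      (convex_Ioi 0)) fun x _ => ?_
    simp [Real.negMulLog, qlog]
  · have h1 : q - 1 ≠ 0 := sub_ne_zero.mpr hq1
    have h2 : 1 - q ≠ 0 := sub_ne_zero.mpr (Ne.symm hq1)
    have key : ∀ x ∈ Set.Ioi (0:ℝ),
        (1/(1-q)) * x ^ q + (1/(q-1)) * x = -x * qlog q x := by
      intro x hx
      have hx0 : (0:ℝ) < x := hx
      have hxq : x ^ q = x * x ^ (q - 1) := by
        have : x ^ q = x ^ (1 + (q - 1)) := by norm_num
        rw [this, Real.rpow_one_add' hx0.le (by simpa using hq.ne')]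
      rw [hxq, qlog, if_neg hq1]
      field_simp
      ring
    rcases lt_or_gt_of_ne hq1 with hlt | hgt
    · -- q < 1 : x^q strictly concave, coefficient 1/(1-q) > 0
      have hpow : StrictConcaveOn ℝ (Set.Ioi (0:ℝ)) (fun x : ℝ => x ^ q) :=
        (Real.strictConcaveOn_rpow hq hlt).subset Set.Ioi_subset_Ici_self (convex_Ioi 0)
      have hc2 := sc_smul (one_div_pos.mpr (by linarith) : (0:ℝ) < 1/(1-q)) hpow
      have hlin : ConcaveOn ℝ (Set.Ioi (0:ℝ)) (fun x : ℝ => (1/(q-1)) * x) := by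
        exact (LinearMap.concaveOn (LinearMap.lsmul ℝ ℝ (1/(q-1))) (convex_Ioi 0))
      exact sc_congr (hc2.add_concaveOn hlin) key
    · have hpow : StrictConcaveOn ℝ (Set.Ioi (0:ℝ)) (fun x : ℝ => -(x ^ q)) :=
        ((strictConvexOn_rpow hgt).subset Set.Ioi_subset_Ici_self (convex_Ioi 0)).neg
      have hc2 := sc_smul (one_div_pos.mpr (by linarith) : (0:ℝ) < 1/(q-1)) hpow
      have h2' : StrictConcaveOn ℝ (Set.Ioi (0:ℝ)) (fun x : ℝ => (1/(1-q)) * x ^ q) := by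
        refine sc_congr hc2 fun x _ => ?_
        field_simp
        ring
      have hlin : ConcaveOn ℝ (Set.Ioi (0:ℝ)) (fun x : ℝ => (1/(q-1)) * x) := by
        exact (LinearMap.concaveOn (LinearMap.lsmul ℝ ℝ (1/(q-1))) (convex_Ioi 0))
      exact sc_congr (h2'.add_concaveOn hlin) key
end

section
/- For any q > 0 and any finite nonempty type X, the Tsallis entropy S_q(P) is maximized over probability distributions P on X exactly at the uniform distribution, and the maximum value is -ln_q(1/|X|). -/
/-! For `q > 0` the summand `p ↦ -p · ln_q p` is strictly concave on `[0, ∞)`: it is `-p log p` for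
`q = 1` and `(p - p ^ q) / (q - 1)` otherwise, where `p ^ q` is strictly concave for `q < 1` and
strictly convex for `q > 1`. Jensen's inequality with uniform weights bounds `S_q(P)` by `|X|` times
the summand at the mean `1 / |X|`, which is `-ln_q(1 / |X|)`, and strict concavity makes the uniform
distribution the only case of equality. -/

open Real Finset

lemma StrictConcaveOn.const_mul {E : Type*} [AddCommMonoid E] [Module ℝ E] {s : Set E}
    {f : E → ℝ} (hf : StrictConcaveOn ℝ s f) {c : ℝ} (hc : 0 < c) :
    StrictConcaveOn ℝ s fun x => c * f x := by
  refine ⟨hf.1, fun x hx y hy hxy a b ha hb hab => ?_⟩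
  have h := mul_lt_mul_of_pos_left (hf.2 hx hy hxy ha hb hab) hc
  simp only [smul_eq_mul] at h ⊢
  linarith

lemma entTerm_one : entTerm 1 = negMulLog := by
  funext p
  by_cases hp : p = 0 <;> simp [entTerm, qlog, negMulLog, hp]

lemma entTerm_eq_div_of_ne_one {q p : ℝ} (hq : q ≠ 0) (hq1 : q ≠ 1) (hp : 0 ≤ p) :
    entTerm q p = (p - p ^ q) / (q - 1) := by
  rcases hp.eq_or_lt with rfl | hp
  · simp [entTerm, Real.zero_rpow hq]
  · have hpq : p ^ q = p * p ^ (q - 1) := by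
      rw [← Real.rpow_one_add' hp.le (by simpa using hq)]; ring_nf
    rw [entTerm, if_neg hp.ne', qlog, if_neg hq1, hpq]
    ring

lemma strictConcaveOn_entTerm {q : ℝ} (hq : 0 < q) :
    StrictConcaveOn ℝ (Set.Ici 0) (entTerm q) := by
  rcases lt_trichotomy q 1 with hlt | rfl | hgt
  · refine ((strictConcaveOn_rpow hq hlt).sub_convexOn (convexOn_id (convex_Ici 0))).const_mul
      (inv_pos.mpr (sub_pos.mpr hlt)) |>.congr fun p hp => ?_
    rw [entTerm_eq_div_of_ne_one hq.ne' hlt.ne hp, ← neg_sub 1 q, div_neg, div_eq_inv_mul]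
    simp only [Pi.sub_apply, id]
    ring
  · rw [entTerm_one]
    exact strictConcaveOn_negMulLog
  · refine ((concaveOn_id (convex_Ici 0)).sub_strictConvexOn (strictConvexOn_rpow hgt)).const_mul
      (inv_pos.mpr (sub_pos.mpr hgt)) |>.congr fun p hp => ?_
    rw [entTerm_eq_div_of_ne_one hq.ne' hgt.ne' hp]
    simp only [Pi.sub_apply, id]
    field_simp

section Jensen

variable {ι : Type*} [Fintype ι]

lemma sum_inv_card_smul (p : ι → ℝ) :
    ∑ i, (Fintype.card ι : ℝ)⁻¹ • p i = (∑ i, p i) / Fintype.card ι := by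
  simp [← Finset.mul_sum, div_eq_inv_mul]

variable [Nonempty ι] {s : Set ℝ} {f : ℝ → ℝ} {p : ι → ℝ}

lemma ConcaveOn.sum_le_card_mul_apply_mean (hf : ConcaveOn ℝ s f) (hp : ∀ i, p i ∈ s) :
    ∑ i, f (p i) ≤ Fintype.card ι * f ((∑ i, p i) / Fintype.card ι) := by
  have hn : (0 : ℝ) < Fintype.card ι := Nat.cast_pos.mpr Fintype.card_pos
  have h := hf.le_map_sum (t := Finset.univ) (w := fun _ => (Fintype.card ι : ℝ)⁻¹) (p := p)
    (fun _ _ => by positivity) (by simp [hn.ne']) (fun i _ => hp i)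
  rw [sum_inv_card_smul, sum_inv_card_smul] at h
  rwa [div_le_iff₀' hn] at h

lemma StrictConcaveOn.sum_eq_card_mul_apply_mean_iff (hf : StrictConcaveOn ℝ s f)
    (hp : ∀ i, p i ∈ s) :
    ∑ i, f (p i) = Fintype.card ι * f ((∑ i, p i) / Fintype.card ι) ↔
      ∀ i, p i = (∑ j, p j) / Fintype.card ι := by
  have hn : (0 : ℝ) < Fintype.card ι := Nat.cast_pos.mpr Fintype.card_pos
  have h := hf.map_sum_eq_iff_of_pos (t := Finset.univ) (w := fun _ => (Fintype.card ι : ℝ)⁻¹)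
    (p := p) (fun _ _ => by positivity) (by simp [hn.ne']) (fun i _ => hp i)
  rw [sum_inv_card_smul, sum_inv_card_smul, eq_comm, div_eq_iff hn.ne', mul_comm] at h
  rw [h]
  constructor
  · intro hconst i
    rw [eq_div_iff hn.ne', mul_comm]
    simp [← hconst (Finset.mem_univ i) (Finset.mem_univ _)]
  · intro hmean j _ k _
    rw [hmean j, hmean k]

end Jensen

lemma Sq_const {X : Type*} [Fintype X] (q c : ℝ) :
    Sq q (fun _ : X => c) = Fintype.card X * entTerm q c := by
  simp [Sq]

lemma mul_entTerm_one_div {q n : ℝ} (hn : n ≠ 0) : n * entTerm q (1 / n) = -qlog q (1 / n) := by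
  rw [entTerm, if_neg (one_div_ne_zero hn)]
  field_simp

theorem stmt4 {X : Type*} [Fintype X] [Nonempty X] (q : ℝ) (hq : 0 < q) :
    Sq q (fun _ : X => 1 / (Fintype.card X : ℝ)) = -qlog q (1 / (Fintype.card X : ℝ)) ∧
    ∀ P : X → ℝ, IsPmf P →
      Sq q P ≤ -qlog q (1 / (Fintype.card X : ℝ)) ∧
      (Sq q P = -qlog q (1 / (Fintype.card X : ℝ)) →
        P = fun _ => 1 / (Fintype.card X : ℝ)) := by
  have hn : (Fintype.card X : ℝ) ≠ 0 := Nat.cast_ne_zero.mpr Fintype.card_ne_zero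
  have hconcave := strictConcaveOn_entTerm hq
  refine ⟨by rw [Sq_const, mul_entTerm_one_div hn], fun P ⟨hP0, hP1⟩ => ?_⟩
  have hmax : -qlog q (1 / (Fintype.card X : ℝ)) =
      Fintype.card X * entTerm q ((∑ x, P x) / Fintype.card X) := by
    rw [hP1, mul_entTerm_one_div hn]
  rw [hmax, Sq]
  refine ⟨hconcave.concaveOn.sum_le_card_mul_apply_mean hP0, fun heq => funext fun x => ?_⟩
  rw [(hconcave.sum_eq_card_mul_apply_mean_iff hP0).mp heq x, hP1]
end

section
/- The Tsallis Bellman optimality operator T_q, defined with the q-maximum in place of the expectation under π, is a γ-contraction in the sup norm on bounded functions F : S × A → ℝ, and hence has a unique fixed point. -/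
open Real Finset

/-- The Tsallis Bellman optimality operator. -/
noncomputable def TBO {St A : Type*} [Fintype St] [Fintype A] (q γ : ℝ)
    (P : St → A → St → ℝ) (r : St → A → St → ℝ)
    (F : St → A → ℝ) : St → A → ℝ :=
  fun s a => ∑ s', P s a s' * (r s a s' + γ * qmax q (fun a' => F s' a'))

/-- The standard Bellman optimality operator. -/
noncomputable def TB {St A : Type*} [Fintype St] [Fintype A] (γ : ℝ)
    (P : St → A → St → ℝ) (r : St → A → St → ℝ)
    (F : St → A → ℝ) : St → A → ℝ :=
  fun s a => ∑ s', P s a s' * (r s a s' + γ * ⨆ a', F s' a')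

/-- The entropy summand is bounded above on `[0,1]`. -/
lemma entTerm_le' (q p : ℝ) (hq : 0 < q) (hp0 : 0 ≤ p) (hp1 : p ≤ 1) :
    entTerm q p ≤ max 1 (1 / |q - 1|) := by
  rcases eq_or_ne p 0 with rfl | hp
  · simp [entTerm]
  · have hp0' : 0 < p := lt_of_le_of_ne hp0 (Ne.symm hp)
    unfold entTerm qlog
    rw [if_neg hp]
    rcases eq_or_ne q 1 with rfl | hq1
    · rw [if_pos rfl]
      have h1 : Real.log p⁻¹ ≤ p⁻¹ - 1 := Real.log_le_sub_one_of_pos (by positivity)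
      rw [Real.log_inv] at h1
      have h2 : p * (-Real.log p) ≤ p * (p⁻¹ - 1) :=
        mul_le_mul_of_nonneg_left h1 hp0
      have h3 : p * (p⁻¹ - 1) = 1 - p := by field_simp
      have : -p * Real.log p ≤ 1 := by nlinarith
      exact this.trans (le_max_left _ _)
    · rw [if_neg hq1]
      have hpow0 : 0 ≤ p ^ (q - 1) := Real.rpow_nonneg hp0 _
      rcases lt_or_gt_of_ne hq1 with hlt | hgt
      · -- q < 1
        have hq1' : 0 < 1 - q := by linarith
        have habs : |q - 1| = 1 - q := by rw [abs_of_neg (by linarith)]; ring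
        have hpq : p * p ^ (q - 1) = p ^ q := by
          have h := Real.rpow_add hp0' 1 (q - 1)
          rw [Real.rpow_one] at h
          rw [show (1 : ℝ) + (q - 1) = q by ring] at h
          exact h.symm
        have hpq1 : p ^ q ≤ 1 := Real.rpow_le_one hp0 hp1 hq.le
        have hrw : -p * ((p ^ (q - 1) - 1) / (q - 1)) = (p * p ^ (q - 1) - p) / (1 - q) := by
          rw [eq_div_iff (by linarith : (1 : ℝ) - q ≠ 0)]
          have hne : (q : ℝ) - 1 ≠ 0 := by linarith
          field_simp
          ring
        have : -p * ((p ^ (q - 1) - 1) / (q - 1)) ≤ 1 / (1 - q) := by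
          rw [hrw, div_le_div_iff₀ hq1' hq1']
          nlinarith
        rw [habs]
        exact this.trans (le_max_right _ _)
      · -- q > 1
        have hq1' : 0 < q - 1 := by linarith
        have habs : |q - 1| = q - 1 := abs_of_pos (by linarith)
        have hrw : -p * ((p ^ (q - 1) - 1) / (q - 1)) = (p - p * p ^ (q - 1)) / (q - 1) := by
          ring
        have : -p * ((p ^ (q - 1) - 1) / (q - 1)) ≤ 1 / (q - 1) := by
          rw [hrw, div_le_div_iff₀ hq1' hq1']
          nlinarith [mul_nonneg hp0 hpow0]
        rw [habs]
        exact this.trans (le_max_right _ _)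

section qmaxlem
variable {X : Type*} [Fintype X] [Nonempty X]

lemma qmaxSet_nonempty (q : ℝ) (f : X → ℝ) :
    {y | ∃ P : X → ℝ, IsPmf P ∧ y = (∑ x, P x * f x) + Sq q P}.Nonempty := by
  have hcard : (0 : ℝ) < Fintype.card X := by
    exact_mod_cast Fintype.card_pos
  refine ⟨_, fun _ => (Fintype.card X : ℝ)⁻¹, ⟨fun x => by positivity, ?_⟩, rfl⟩
  rw [Finset.sum_const, card_univ, nsmul_eq_mul]
  field_simp

omit [Nonempty X] in
lemma IsPmf.le_one' {P : X → ℝ} (hP : IsPmf P) (x : X) : P x ≤ 1 := by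
  rw [← hP.2]
  exact Finset.single_le_sum (fun y _ => hP.1 y) (Finset.mem_univ x)

lemma qmaxSet_bddAbove (q : ℝ) (hq : 0 < q) (f : X → ℝ) :
    BddAbove {y | ∃ P : X → ℝ, IsPmf P ∧ y = (∑ x, P x * f x) + Sq q P} := by
  refine ⟨(⨆ x, f x) + Fintype.card X * max 1 (1 / |q - 1|), ?_⟩
  rintro y ⟨P, hP, rfl⟩
  have hbdd : BddAbove (Set.range f) := Set.Finite.bddAbove (Set.finite_range f)
  have h1 : ∑ x, P x * f x ≤ ⨆ x, f x := by
    calc ∑ x, P x * f x ≤ ∑ x, P x * (⨆ x, f x) :=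
          Finset.sum_le_sum fun x _ =>
            mul_le_mul_of_nonneg_left (le_ciSup hbdd x) (hP.1 x)
      _ = ⨆ x, f x := by rw [← Finset.sum_mul, hP.2, one_mul]
  have h2 : Sq q P ≤ Fintype.card X * max 1 (1 / |q - 1|) := by
    calc Sq q P ≤ ∑ _x : X, max 1 (1 / |q - 1|) :=
          Finset.sum_le_sum fun x _ => entTerm_le' q (P x) hq (hP.1 x) (hP.le_one' x)
      _ = Fintype.card X * max 1 (1 / |q - 1|) := by
          rw [Finset.sum_const, card_univ, nsmul_eq_mul]
  linarith

lemma qmax_le_qmax_add (q : ℝ) (hq : 0 < q) {f g : X → ℝ} {C : ℝ}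
    (h : ∀ x, f x ≤ g x + C) : qmax q f ≤ qmax q g + C := by
  apply csSup_le (qmaxSet_nonempty q f)
  rintro y ⟨P, hP, rfl⟩
  have h1 : ∑ x, P x * f x ≤ (∑ x, P x * g x) + C := by
    calc ∑ x, P x * f x ≤ ∑ x, P x * (g x + C) :=
          Finset.sum_le_sum fun x _ => mul_le_mul_of_nonneg_left (h x) (hP.1 x)
      _ = (∑ x, P x * g x) + (∑ x, P x) * C := by
          rw [Finset.sum_mul]
          rw [← Finset.sum_add_distrib]
          congr 1; ext x; ring
      _ = (∑ x, P x * g x) + C := by rw [hP.2, one_mul]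
  have h2 : (∑ x, P x * g x) + Sq q P ≤ qmax q g :=
    le_csSup (qmaxSet_bddAbove q hq g) ⟨P, hP, rfl⟩
  linarith

lemma abs_qmax_sub_le (q : ℝ) (hq : 0 < q) {f g : X → ℝ} {C : ℝ}
    (h : ∀ x, |f x - g x| ≤ C) : |qmax q f - qmax q g| ≤ C := by
  rw [abs_sub_le_iff]
  constructor
  · have := qmax_le_qmax_add q hq (f := f) (g := g) (C := C)
      (fun x => by have := h x; rw [abs_sub_le_iff] at this; linarith [this.1])
    linarith
  · have := qmax_le_qmax_add q hq (f := g) (g := f) (C := C)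
      (fun x => by have := h x; rw [abs_sub_le_iff] at this; linarith [this.2])
    linarith

end qmaxlem

theorem stmt15 {St A : Type*} [Fintype St] [Fintype A] [Nonempty St] [Nonempty A]
    (q γ : ℝ) (hq : 0 < q) (hγ0 : 0 < γ) (hγ1 : γ < 1)
    (P : St → A → St → ℝ) (hP : ∀ s a, IsPmf (P s a))
    (r : St → A → St → ℝ) :
    (∀ F G : St → A → ℝ,
      (⨆ p : St × A, |TBO q γ P r F p.1 p.2 - TBO q γ P r G p.1 p.2|) ≤
        γ * ⨆ p : St × A, |F p.1 p.2 - G p.1 p.2|) ∧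
    (∃! F : St → A → ℝ, TBO q γ P r F = F) := by
  have key : ∀ F G : St → A → ℝ, ∀ (s : St) (a : A) (C : ℝ),
      (∀ s' a', |F s' a' - G s' a'| ≤ C) →
      |TBO q γ P r F s a - TBO q γ P r G s a| ≤ γ * C := by
    intro F G s a C hCle
    have hdiff : TBO q γ P r F s a - TBO q γ P r G s a =
        ∑ s', P s a s' * (γ * (qmax q (fun a' => F s' a') - qmax q (fun a' => G s' a'))) := by
      unfold TBO
      rw [← Finset.sum_sub_distrib]
      congr 1; ext s'; ring
    rw [hdiff]
    calc |∑ s', P s a s' * (γ * (qmax q (fun a' => F s' a') - qmax q (fun a' => G s' a')))|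
        ≤ ∑ s', |P s a s' * (γ * (qmax q (fun a' => F s' a') - qmax q (fun a' => G s' a')))| :=
          Finset.abs_sum_le_sum_abs _ _
      _ ≤ ∑ s', P s a s' * (γ * C) := by
          apply Finset.sum_le_sum
          intro s' _
          rw [abs_mul, abs_mul, abs_of_nonneg ((hP s a).1 s'), abs_of_nonneg hγ0.le]
          have hd : |qmax q (fun a' => F s' a') - qmax q (fun a' => G s' a')| ≤ C :=
            abs_qmax_sub_le q hq (fun a' => hCle s' a')
          have := (hP s a).1 s'
          exact mul_le_mul_of_nonneg_left (mul_le_mul_of_nonneg_left hd hγ0.le) this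
      _ = γ * C := by rw [← Finset.sum_mul, (hP s a).2, one_mul]
  constructor
  · intro F G
    have hbdd : BddAbove (Set.range fun p : St × A => |F p.1 p.2 - G p.1 p.2|) :=
      Set.Finite.bddAbove (Set.finite_range _)
    exact ciSup_le fun p => key F G p.1 p.2 _ (fun s' a' => le_ciSup hbdd (s', a'))
  · set K : NNReal := ⟨γ, hγ0.le⟩ with hK
    have hc : ContractingWith K (TBO q γ P r) := by
      constructor
      · exact_mod_cast hγ1
      · apply LipschitzWith.of_dist_le_mul
        intro F G
        have h0 : (0 : ℝ) ≤ (K : ℝ) * dist F G := mul_nonneg K.2 dist_nonneg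
        rw [dist_pi_le_iff h0]
        intro s
        rw [dist_pi_le_iff h0]
        intro a
        rw [Real.dist_eq]
        have hKγ : (K : ℝ) = γ := rfl
        rw [hKγ]
        refine key F G s a (dist F G) (fun s' a' => ?_)
        calc |F s' a' - G s' a'| = dist (F s' a') (G s' a') := (Real.dist_eq _ _).symm
          _ ≤ dist (F s') (G s') := dist_le_pi_dist _ _ a'
          _ ≤ dist F G := dist_le_pi_dist F G s'
    exact ⟨hc.fixedPoint, hc.fixedPoint_isFixedPt,
      fun y hy => hc.fixedPoint_unique hy⟩
end

section
/- Performance error bound: if π* is an optimal policy of the original MDP and π*_q the optimal policy of the Tsallis-entropy-regularized MDP with entropic index q > 0, then J(π*) + (1-γ)^{-1} ln_q(1/|A|) ≤ J(π*_q) ≤ J(π*), where J(π) denotes the expected discounted sum of rewards of π. -/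
open Real Finset

/-- Standard policy-evaluation Bellman operator on state values. -/
noncomputable def Tpol {St A : Type*} [Fintype St] [Fintype A] (γ : ℝ)
    (P : St → A → St → ℝ) (r : St → A → St → ℝ) (pol : St → A → ℝ)
    (V : St → ℝ) : St → ℝ :=
  fun s => ∑ a, pol s a * ∑ s', P s a s' * (r s a s' + γ * V s')

/-- Tsallis-entropy-regularized policy-evaluation operator on state values. -/
noncomputable def TqPol {St A : Type*} [Fintype St] [Fintype A] (q γ : ℝ)
    (P : St → A → St → ℝ) (r : St → A → St → ℝ) (pol : St → A → ℝ)
    (V : St → ℝ) : St → ℝ :=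
  fun s => Sq q (pol s) + ∑ a, pol s a * ∑ s', P s a s' * (r s a s' + γ * V s')

/-! ### Auxiliary lemmas about the Tsallis entropy -/

lemma qlog_nonpos {q p : ℝ} (hq : 0 < q) (hp : 0 < p) (hp1 : p ≤ 1) : qlog q p ≤ 0 := by
  unfold qlog
  split_ifs with h
  · exact Real.log_nonpos hp.le hp1
  · rcases lt_or_gt_of_ne h with hlt | hgt
    · have h1 : (1:ℝ) ≤ p ^ (q - 1) :=
        Real.one_le_rpow_of_pos_of_le_one_of_nonpos hp hp1 (by linarith)
      exact div_nonpos_of_nonneg_of_nonpos (by linarith) (by linarith)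
    · have h1 : p ^ (q - 1) ≤ 1 := Real.rpow_le_one hp.le hp1 (by linarith)
      exact div_nonpos_of_nonpos_of_nonneg (by linarith) (by linarith)

lemma entTerm_nonneg {q p : ℝ} (hq : 0 < q) (hp : 0 ≤ p) (hp1 : p ≤ 1) : 0 ≤ entTerm q p := by
  unfold entTerm
  split_ifs with h
  · exact le_refl 0
  · have hp' : 0 < p := lt_of_le_of_ne hp (Ne.symm h)
    have := qlog_nonpos hq hp' hp1
    nlinarith

lemma pmf_le_one {X : Type*} [Fintype X] {P : X → ℝ} (hP : IsPmf P) (x : X) : P x ≤ 1 := by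
  rw [← hP.2]
  exact Finset.single_le_sum (fun i _ => hP.1 i) (Finset.mem_univ x)

lemma Sq_nonneg {X : Type*} [Fintype X] {q : ℝ} (hq : 0 < q) {P : X → ℝ} (hP : IsPmf P) :
    0 ≤ Sq q P :=
  Finset.sum_nonneg fun x _ => entTerm_nonneg hq (hP.1 x) (pmf_le_one hP x)

lemma entTerm_one_s17 (p : ℝ) : entTerm 1 p = Real.negMulLog p := by
  have hq : qlog 1 p = Real.log p := by unfold qlog; rw [if_pos rfl]
  unfold entTerm Real.negMulLog
  rw [hq]
  split_ifs with h
  · simp [h]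
  · ring

lemma entTerm_eq {q p : ℝ} (hq : 0 < q) (hq1 : q ≠ 1) (hp : 0 ≤ p) :
    entTerm q p = (p - p ^ q) / (q - 1) := by
  unfold entTerm qlog
  rw [if_neg hq1]
  split_ifs with h
  · simp [h, Real.zero_rpow hq.ne']
  · have hp' : 0 < p := lt_of_le_of_ne hp (Ne.symm h)
    have hpq : p ^ q = p * p ^ (q - 1) := by
      have h := Real.rpow_add hp' 1 (q - 1)
      rw [Real.rpow_one, show (1:ℝ) + (q - 1) = q by ring] at h
      exact h
    rw [hpq]
    field_simp
    ring

/-- Tsallis entropy is at most `-ln_q(1/|X|)`. -/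
lemma Sq_le {X : Type*} [Fintype X] [Nonempty X] {q : ℝ} (hq : 0 < q) {P : X → ℝ}
    (hP : IsPmf P) : Sq q P ≤ -qlog q (1 / (Fintype.card X : ℝ)) := by
  set n : ℝ := (Fintype.card X : ℝ) with hn
  have hn1 : (1:ℝ) ≤ n := by
    have h : (1:ℕ) ≤ Fintype.card X := Fintype.card_pos
    rw [hn]; exact_mod_cast h
  have hnpos : 0 < n := lt_of_lt_of_le one_pos hn1
  have hwsum : ∑ _i : X, (1 / n : ℝ) = 1 := by
    rw [Finset.sum_const, nsmul_eq_mul, Finset.card_univ, ← hn]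
    field_simp
  by_cases hq1 : q = 1
  · subst hq1
    have hjen := Real.concaveOn_negMulLog.le_map_sum (t := Finset.univ)
      (w := fun _ : X => 1 / n) (p := P)
      (fun i _ => by positivity) hwsum (fun i _ => hP.1 i)
    have hsum : ∑ i, (1 / n) • P i = 1 / n := by
      rw [← Finset.smul_sum, hP.2]; simp
    rw [hsum] at hjen
    have h2 : ∑ i, (1 / n) • Real.negMulLog (P i) = (1 / n) * ∑ i, Real.negMulLog (P i) := by
      rw [Finset.mul_sum]; rfl
    rw [h2] at hjen
    have h3 : Real.negMulLog (1 / n) = -(1 / n) * Real.log (1 / n) := rfl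
    have hfin : ∑ i, Real.negMulLog (P i) ≤ -Real.log (1 / n) := by
      have h4 := mul_le_mul_of_nonneg_left hjen hnpos.le
      rw [h3] at h4
      have hne : n ≠ 0 := hnpos.ne'
      calc ∑ i, Real.negMulLog (P i) = n * (1 / n * ∑ i, Real.negMulLog (P i)) := by
            field_simp
        _ ≤ n * (-(1 / n) * Real.log (1 / n)) := h4
        _ = -Real.log (1 / n) := by field_simp
    calc Sq 1 P = ∑ i, Real.negMulLog (P i) :=
          Finset.sum_congr rfl fun i _ => entTerm_one_s17 (P i)
      _ ≤ -Real.log (1 / n) := hfin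
      _ = -qlog 1 (1 / n) := by unfold qlog; rw [if_pos rfl]
  · -- q ≠ 1
    have hSq : Sq q P = (1 - ∑ i, P i ^ q) / (q - 1) := by
      unfold Sq
      rw [Finset.sum_congr rfl fun i _ => entTerm_eq hq hq1 (hP.1 i), ← Finset.sum_div,
        Finset.sum_sub_distrib, hP.2]
    have hrhs : -qlog q (1 / n) = (1 - (1 / n) ^ (q - 1)) / (q - 1) := by
      unfold qlog
      rw [if_neg hq1]
      ring
    rw [hSq, hrhs]
    have hnpow : (0:ℝ) < n ^ (q - 1) := Real.rpow_pos_of_pos hnpos _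
    have hinv : (1 / n : ℝ) ^ (q - 1) = (n ^ (q - 1))⁻¹ := by
      rw [one_div, ← Real.rpow_neg_one n, ← Real.rpow_mul hnpos.le, neg_one_mul,
        Real.rpow_neg hnpos.le]
    have hsum1 : ∑ i, (1 / n : ℝ) * (n * P i) = 1 := by
      calc ∑ i, (1 / n : ℝ) * (n * P i) = ∑ i, P i := by
            refine Finset.sum_congr rfl fun i _ => ?_
            field_simp
        _ = 1 := hP.2
    have hsum2 : ∑ i, (1 / n : ℝ) * (n * P i) ^ q = n ^ (q - 1) * ∑ i, P i ^ q := by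
      rw [Finset.mul_sum]
      refine Finset.sum_congr rfl fun i _ => ?_
      rw [Real.mul_rpow hnpos.le (hP.1 i),
        show (q:ℝ) = (q - 1) + 1 by ring, Real.rpow_add hnpos, Real.rpow_one]
      field_simp
      ring
    rcases lt_or_gt_of_ne hq1 with hlt | hgt
    · -- q < 1 : need ∑ P i ^ q ≤ (1/n)^(q-1)
      have h1q : (1:ℝ) ≤ 1 / q := by
        rw [le_div_iff₀ hq]; linarith
      have hjen := Real.rpow_arith_mean_le_arith_mean_rpow Finset.univ
        (fun _ : X => 1 / n) (fun i => (n * P i) ^ q)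
        (fun i _ => by positivity) hwsum
        (fun i _ => Real.rpow_nonneg (mul_nonneg hnpos.le (hP.1 i)) q) h1q
      have hsimp : ∀ i : X, ((n * P i) ^ q) ^ (1 / q : ℝ) = n * P i := by
        intro i
        rw [← Real.rpow_mul (mul_nonneg hnpos.le (hP.1 i)), mul_one_div_cancel hq.ne',
          Real.rpow_one]
      have hrsum : ∑ i, (1 / n : ℝ) * ((n * P i) ^ q) ^ (1 / q : ℝ) = 1 := by
        rw [Finset.sum_congr rfl fun i _ => by rw [hsimp i]]
        exact hsum1
      rw [hrsum] at hjen
      set T : ℝ := ∑ i, (1 / n : ℝ) * (n * P i) ^ q with hT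
      have hT0 : 0 ≤ T := Finset.sum_nonneg fun i _ =>
        mul_nonneg (by positivity) (Real.rpow_nonneg (mul_nonneg hnpos.le (hP.1 i)) q)
      have hT1 : T ≤ 1 := by
        have : T = (T ^ (1 / q : ℝ)) ^ q := by
          rw [← Real.rpow_mul hT0, one_div_mul_cancel hq.ne', Real.rpow_one]
        rw [this]
        exact Real.rpow_le_one (Real.rpow_nonneg hT0 _) hjen hq.le
      rw [hsum2] at hT1
      have hkey : ∑ i, P i ^ q ≤ (1 / n : ℝ) ^ (q - 1) := by
        rw [hinv]
        calc ∑ i, P i ^ q = (n ^ (q - 1))⁻¹ * (n ^ (q - 1) * ∑ i, P i ^ q) := by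
              field_simp
          _ ≤ (n ^ (q - 1))⁻¹ * 1 := mul_le_mul_of_nonneg_left hT1 (by positivity)
          _ = (n ^ (q - 1))⁻¹ := mul_one _
      have hnum : 1 - (1 / n : ℝ) ^ (q - 1) ≤ 1 - ∑ i, P i ^ q := by linarith
      exact div_le_div_of_nonpos_of_le (by linarith) hnum
    · -- q > 1 : need (1/n)^(q-1) ≤ ∑ P i ^ q
      have hjen := Real.rpow_arith_mean_le_arith_mean_rpow Finset.univ
        (fun _ : X => 1 / n) (fun i => n * P i)
        (fun i _ => by positivity) hwsum
        (fun i _ => mul_nonneg hnpos.le (hP.1 i)) hgt.le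
      rw [hsum1, Real.one_rpow, hsum2] at hjen
      have hkey : (1 / n : ℝ) ^ (q - 1) ≤ ∑ i, P i ^ q := by
        rw [hinv]
        calc (n ^ (q - 1))⁻¹ = (n ^ (q - 1))⁻¹ * 1 := (mul_one _).symm
          _ ≤ (n ^ (q - 1))⁻¹ * (n ^ (q - 1) * ∑ i, P i ^ q) :=
              mul_le_mul_of_nonneg_left hjen (by positivity)
          _ = ∑ i, P i ^ q := by field_simp
      have hnum : 1 - ∑ i, P i ^ q ≤ 1 - (1 / n : ℝ) ^ (q - 1) := by linarith
      exact div_le_div_of_nonneg_right hnum (by linarith)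

/-! ### Fixed points of the affine recursion -/

lemma fp_upper {St A : Type*} [Fintype St] [Fintype A] [Nonempty St]
    {γ : ℝ} (hγ0 : 0 ≤ γ) (hγ1 : γ < 1)
    {pol : St → A → ℝ} (hpol : ∀ s, IsPmf (pol s))
    {P : St → A → St → ℝ} (hP : ∀ s a, IsPmf (P s a))
    {c W : St → ℝ} {hi : ℝ} (hc : ∀ s, c s ≤ hi)
    (hW : ∀ s, W s = c s + γ * ∑ a, pol s a * ∑ s', P s a s' * W s') :
    ∀ s, W s ≤ hi / (1 - γ) := by
  obtain ⟨s₀, -, hmax⟩ := Finset.exists_max_image Finset.univ W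
    ⟨Classical.arbitrary St, Finset.mem_univ _⟩
  have hmax' : ∀ s, W s ≤ W s₀ := fun s => hmax s (Finset.mem_univ s)
  have hinner : ∀ s a, ∑ s', P s a s' * W s' ≤ W s₀ := by
    intro s a
    calc ∑ s', P s a s' * W s' ≤ ∑ s', P s a s' * W s₀ :=
          Finset.sum_le_sum fun s' _ => mul_le_mul_of_nonneg_left (hmax' s') ((hP s a).1 s')
      _ = W s₀ := by rw [← Finset.sum_mul, (hP s a).2, one_mul]
  have houter : ∑ a, pol s₀ a * ∑ s', P s₀ a s' * W s' ≤ W s₀ := by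
    calc ∑ a, pol s₀ a * ∑ s', P s₀ a s' * W s' ≤ ∑ a, pol s₀ a * W s₀ :=
          Finset.sum_le_sum fun a _ => mul_le_mul_of_nonneg_left (hinner s₀ a) ((hpol s₀).1 a)
      _ = W s₀ := by rw [← Finset.sum_mul, (hpol s₀).2, one_mul]
  have h0 : W s₀ ≤ hi + γ * W s₀ := by
    have h := hW s₀
    have hmul := mul_le_mul_of_nonneg_left houter hγ0
    linarith [hc s₀]
  have hfin : W s₀ ≤ hi / (1 - γ) := by
    rw [le_div_iff₀ (by linarith : (0:ℝ) < 1 - γ)]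
    nlinarith
  exact fun s => le_trans (hmax' s) hfin

lemma fp_lower {St A : Type*} [Fintype St] [Fintype A] [Nonempty St]
    {γ : ℝ} (hγ0 : 0 ≤ γ) (hγ1 : γ < 1)
    {pol : St → A → ℝ} (hpol : ∀ s, IsPmf (pol s))
    {P : St → A → St → ℝ} (hP : ∀ s a, IsPmf (P s a))
    {c W : St → ℝ} {lo : ℝ} (hc : ∀ s, lo ≤ c s)
    (hW : ∀ s, W s = c s + γ * ∑ a, pol s a * ∑ s', P s a s' * W s') :
    ∀ s, lo / (1 - γ) ≤ W s := by
  have hrec : ∀ s, (fun s => -W s) s =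
      (fun s => -c s) s + γ * ∑ a, pol s a * ∑ s', P s a s' * (fun s => -W s) s' := by
    intro s
    show -W s = -c s + γ * ∑ a, pol s a * ∑ s', P s a s' * -W s'
    have hneg : ∑ a, pol s a * ∑ s', P s a s' * -W s'
        = -∑ a, pol s a * ∑ s', P s a s' * W s' := by
      simp only [mul_neg, Finset.sum_neg_distrib]
    rw [hneg, hW s]
    ring
  have h := fp_upper (hi := -lo) hγ0 hγ1 hpol hP (fun s => neg_le_neg (hc s)) hrec
  intro s
  have h1 := h s
  have h2 : -lo / (1 - γ) = -(lo / (1 - γ)) := neg_div _ _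
  simp only [h2] at h1
  linarith

lemma fp_exists {St A : Type*} [Fintype St] [Fintype A] [Nonempty St]
    {γ : ℝ} (hγ0 : 0 ≤ γ) (hγ1 : γ < 1)
    {pol : St → A → ℝ} (hpol : ∀ s, IsPmf (pol s))
    {P : St → A → St → ℝ} (hP : ∀ s a, IsPmf (P s a))
    (c : St → ℝ) :
    ∃ W : St → ℝ, ∀ s, W s = c s + γ * ∑ a, pol s a * ∑ s', P s a s' * W s' := by
  set F : (St → ℝ) → (St → ℝ) :=
    fun W s => c s + γ * ∑ a, pol s a * ∑ s', P s a s' * W s' with hF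
  have hLip : LipschitzWith ⟨γ, hγ0⟩ F := by
    apply LipschitzWith.of_dist_le_mul
    intro W W'
    show dist (F W) (F W') ≤ γ * dist W W'
    rw [dist_pi_le_iff (mul_nonneg hγ0 dist_nonneg)]
    intro s
    have hsub : (∑ a, pol s a * ∑ s', P s a s' * W s')
          - (∑ a, pol s a * ∑ s', P s a s' * W' s')
        = ∑ a, pol s a * ∑ s', P s a s' * (W s' - W' s') := by
      rw [← Finset.sum_sub_distrib]
      refine Finset.sum_congr rfl fun a _ => ?_
      rw [← mul_sub, ← Finset.sum_sub_distrib]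
      congr 1
      exact Finset.sum_congr rfl fun s' _ => by ring
    have hdiff : F W s - F W' s
        = γ * ∑ a, pol s a * ∑ s', P s a s' * (W s' - W' s') := by
      simp only [hF]
      rw [← hsub]
      ring
    have hinner : ∀ a, |∑ s', P s a s' * (W s' - W' s')| ≤ dist W W' := by
      intro a
      calc |∑ s', P s a s' * (W s' - W' s')| ≤ ∑ s', |P s a s' * (W s' - W' s')| :=
            Finset.abs_sum_le_sum_abs _ _
        _ = ∑ s', P s a s' * |W s' - W' s'| := by
            refine Finset.sum_congr rfl fun s' _ => ?_
            rw [abs_mul, abs_of_nonneg ((hP s a).1 s')]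
        _ ≤ ∑ s', P s a s' * dist W W' := by
            refine Finset.sum_le_sum fun s' _ => ?_
            refine mul_le_mul_of_nonneg_left ?_ ((hP s a).1 s')
            rw [← Real.dist_eq]
            exact dist_le_pi_dist W W' s'
        _ = dist W W' := by rw [← Finset.sum_mul, (hP s a).2, one_mul]
    have houter : |∑ a, pol s a * ∑ s', P s a s' * (W s' - W' s')| ≤ dist W W' := by
      calc |∑ a, pol s a * ∑ s', P s a s' * (W s' - W' s')|
          ≤ ∑ a, |pol s a * ∑ s', P s a s' * (W s' - W' s')| := Finset.abs_sum_le_sum_abs _ _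
        _ = ∑ a, pol s a * |∑ s', P s a s' * (W s' - W' s')| := by
            refine Finset.sum_congr rfl fun a _ => ?_
            rw [abs_mul, abs_of_nonneg ((hpol s).1 a)]
        _ ≤ ∑ a, pol s a * dist W W' :=
            Finset.sum_le_sum fun a _ =>
              mul_le_mul_of_nonneg_left (hinner a) ((hpol s).1 a)
        _ = dist W W' := by rw [← Finset.sum_mul, (hpol s).2, one_mul]
    calc dist (F W s) (F W' s) = |F W s - F W' s| := Real.dist_eq _ _
      _ = γ * |∑ a, pol s a * ∑ s', P s a s' * (W s' - W' s')| := by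
          rw [hdiff, abs_mul, abs_of_nonneg hγ0]
      _ ≤ γ * dist W W' := mul_le_mul_of_nonneg_left houter hγ0
  have hcon : ContractingWith ⟨γ, hγ0⟩ F := ⟨by exact_mod_cast hγ1, hLip⟩
  refine ⟨ContractingWith.fixedPoint F hcon, fun s => ?_⟩
  conv_lhs => rw [← hcon.fixedPoint_isFixedPt]

/-! ### Main theorem -/

theorem stmt17 {St A : Type*} [Fintype St] [Fintype A] [Nonempty St] [Nonempty A]
    (q γ : ℝ) (hq : 0 < q) (hγ0 : 0 < γ) (hγ1 : γ < 1)
    (d : St → ℝ) (hd : IsPmf d)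
    (P : St → A → St → ℝ) (hP : ∀ s a, IsPmf (P s a))
    (r : St → A → St → ℝ)
    (pistar piq : St → A → ℝ)
    (hpistar : ∀ s, IsPmf (pistar s)) (hpiq : ∀ s, IsPmf (piq s))
    (Vstar Vq Vplainq : St → ℝ)
    (hVstar : Tpol γ P r pistar Vstar = Vstar)
    (hVq : TqPol q γ P r piq Vq = Vq)
    (hVplainq : Tpol γ P r piq Vplainq = Vplainq)
    (hopt : ∀ pol : St → A → ℝ, (∀ s, IsPmf (pol s)) → ∀ V : St → ℝ,
      Tpol γ P r pol V = V → ∑ s, d s * V s ≤ ∑ s, d s * Vstar s)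
    (hoptq : ∀ pol : St → A → ℝ, (∀ s, IsPmf (pol s)) → ∀ V : St → ℝ,
      TqPol q γ P r pol V = V → ∑ s, d s * V s ≤ ∑ s, d s * Vq s) :
    (∑ s, d s * Vstar s) + (1 - γ)⁻¹ * qlog q (1 / (Fintype.card A : ℝ)) ≤
      (∑ s, d s * Vplainq s) ∧
    (∑ s, d s * Vplainq s) ≤ ∑ s, d s * Vstar s := by
  obtain ⟨hd0, hd1⟩ := hd
  have part2 : ∑ s, d s * Vplainq s ≤ ∑ s, d s * Vstar s := hopt piq hpiq Vplainq hVplainq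
  refine ⟨?_, part2⟩
  set n : ℝ := (Fintype.card A : ℝ) with hn
  have hA1 : (1:ℝ) ≤ n := by
    have h : (1:ℕ) ≤ Fintype.card A := Fintype.card_pos
    rw [hn]; exact_mod_cast h
  have hnpos : (0:ℝ) < n := lt_of_lt_of_le one_pos hA1
  set S : ℝ := -qlog q (1 / n) with hS
  have h1n : (1:ℝ) / n ≤ 1 := by rw [div_le_one hnpos]; exact hA1
  have hSnn : 0 ≤ S := by
    have := qlog_nonpos hq (show (0:ℝ) < 1 / n by positivity) h1n
    simp only [hS]; linarith
  -- Step A: build a TqPol fixed point for pistar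
  obtain ⟨W, hWrec⟩ := fp_exists hγ0.le hγ1 hpistar hP (fun s => Sq q (pistar s))
  have hWnn : ∀ s, 0 ≤ W s := by
    have h := fp_lower (lo := 0) (c := fun s => Sq q (pistar s)) (W := W) hγ0.le hγ1 hpistar hP
      (fun s => Sq_nonneg hq (hpistar s)) hWrec
    intro s
    have := h s
    rwa [zero_div] at this
  have hVfix : TqPol q γ P r pistar (fun s => Vstar s + W s) = (fun s => Vstar s + W s) := by
    funext s
    show Sq q (pistar s) +
        ∑ a, pistar s a * ∑ s', P s a s' * (r s a s' + γ * (Vstar s' + W s'))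
      = Vstar s + W s
    have hinner : ∀ a, ∑ s', P s a s' * (r s a s' + γ * (Vstar s' + W s'))
        = (∑ s', P s a s' * (r s a s' + γ * Vstar s')) + γ * ∑ s', P s a s' * W s' := by
      intro a
      rw [Finset.mul_sum, ← Finset.sum_add_distrib]
      exact Finset.sum_congr rfl fun s' _ => by ring
    have h2 : ∑ a, pistar s a * ∑ s', P s a s' * (r s a s' + γ * (Vstar s' + W s'))
        = (∑ a, pistar s a * ∑ s', P s a s' * (r s a s' + γ * Vstar s'))
          + γ * ∑ a, pistar s a * ∑ s', P s a s' * W s' := by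
      calc ∑ a, pistar s a * ∑ s', P s a s' * (r s a s' + γ * (Vstar s' + W s'))
          = ∑ a, (pistar s a * ∑ s', P s a s' * (r s a s' + γ * Vstar s')
              + γ * (pistar s a * ∑ s', P s a s' * W s')) :=
            Finset.sum_congr rfl fun a _ => by rw [hinner a]; ring
        _ = _ := by rw [Finset.sum_add_distrib, ← Finset.mul_sum]
    rw [h2]
    have h3 : ∑ a, pistar s a * ∑ s', P s a s' * (r s a s' + γ * Vstar s') = Vstar s :=
      congrFun hVstar s
    rw [h3]
    linarith [hWrec s]
  have hA : ∑ s, d s * Vstar s ≤ ∑ s, d s * Vq s := by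
    have h := hoptq pistar hpistar _ hVfix
    have hle : ∑ s, d s * Vstar s ≤ ∑ s, d s * (Vstar s + W s) :=
      Finset.sum_le_sum fun s _ => by nlinarith [hd0 s, hWnn s]
    linarith
  -- Step B: Vq - Vplainq satisfies the affine recursion with c = Sq(piq ·)
  have hW'rec : ∀ s, (fun s => Vq s - Vplainq s) s = Sq q (piq s)
      + γ * ∑ a, piq s a * ∑ s', P s a s' * (fun s => Vq s - Vplainq s) s' := by
    intro s
    have h1 : Sq q (piq s) + ∑ a, piq s a * ∑ s', P s a s' * (r s a s' + γ * Vq s')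
        = Vq s := congrFun hVq s
    have h2 : ∑ a, piq s a * ∑ s', P s a s' * (r s a s' + γ * Vplainq s')
        = Vplainq s := congrFun hVplainq s
    have hinner : ∀ a, ∑ s', P s a s' * (r s a s' + γ * Vq s')
        = (∑ s', P s a s' * (r s a s' + γ * Vplainq s'))
          + γ * ∑ s', P s a s' * (Vq s' - Vplainq s') := by
      intro a
      rw [Finset.mul_sum, ← Finset.sum_add_distrib]
      exact Finset.sum_congr rfl fun s' _ => by ring
    have h3 : ∑ a, piq s a * ∑ s', P s a s' * (r s a s' + γ * Vq s')
        = (∑ a, piq s a * ∑ s', P s a s' * (r s a s' + γ * Vplainq s'))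
          + γ * ∑ a, piq s a * ∑ s', P s a s' * (Vq s' - Vplainq s') := by
      calc ∑ a, piq s a * ∑ s', P s a s' * (r s a s' + γ * Vq s')
          = ∑ a, (piq s a * ∑ s', P s a s' * (r s a s' + γ * Vplainq s')
              + γ * (piq s a * ∑ s', P s a s' * (Vq s' - Vplainq s'))) :=
            Finset.sum_congr rfl fun a _ => by rw [hinner a]; ring
        _ = _ := by rw [Finset.sum_add_distrib, ← Finset.mul_sum]
    rw [h3] at h1
    show Vq s - Vplainq s = Sq q (piq s)
      + γ * ∑ a, piq s a * ∑ s', P s a s' * (Vq s' - Vplainq s')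
    linarith
  have hW'le : ∀ s, Vq s - Vplainq s ≤ S / (1 - γ) := by
    have h := fp_upper (hi := S) (c := fun s => Sq q (piq s))
      (W := fun s => Vq s - Vplainq s) hγ0.le hγ1 hpiq hP
      (fun s => Sq_le hq (hpiq s)) hW'rec
    exact h
  have hB : ∑ s, d s * Vq s ≤ ∑ s, d s * Vplainq s + S / (1 - γ) := by
    have hdiff : ∑ s, d s * Vq s - ∑ s, d s * Vplainq s
        = ∑ s, d s * (Vq s - Vplainq s) := by
      rw [← Finset.sum_sub_distrib]
      exact Finset.sum_congr rfl fun s _ => by ring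
    have hle : ∑ s, d s * (Vq s - Vplainq s) ≤ ∑ s, d s * (S / (1 - γ)) :=
      Finset.sum_le_sum fun s _ => mul_le_mul_of_nonneg_left (hW'le s) (hd0 s)
    have hsum : ∑ s, d s * (S / (1 - γ)) = S / (1 - γ) := by
      rw [← Finset.sum_mul, hd1, one_mul]
    linarith
  have hconv : S / (1 - γ) = (1 - γ)⁻¹ * S := div_eq_inv_mul S (1 - γ)
  have hgoal : (1 - γ)⁻¹ * qlog q (1 / n) = -((1 - γ)⁻¹ * S) := by
    simp only [hS]; ring
  rw [hgoal]
  linarith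
end

section
/- Tsallis policy improvement: let π_{k+1}(·|s) maximize E_{a~π}[Q_q^{π_k}(s,a) - ln_q(π(a|s))] over probability distributions on A for each s. Then Q_q^{π_{k+1}}(s,a) ≥ Q_q^{π_k}(s,a) for all (s,a). -/
open Real Finset

/-- The Tsallis Bellman expectation operator. -/
noncomputable def TBE {St A : Type*} [Fintype St] [Fintype A] (q γ : ℝ)
    (P : St → A → St → ℝ) (r : St → A → St → ℝ) (pol : St → A → ℝ)
    (F : St → A → ℝ) : St → A → ℝ :=
  fun s a => ∑ s', P s a s' *
    (r s a s' + γ * ∑ a', (pol s' a' * F s' a' + entTerm q (pol s' a')))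

/- Policy improvement makes `Q^{π_k}` a subsolution of the Bellman operator of `π_{k+1}`:
`Q^{π_k} = T^{π_k} Q^{π_k} ≤ T^{π_{k+1}} Q^{π_k}`. Since `T^{π_{k+1}}` is monotone and shifts
constants by `γ`, a bound `Q^{π_k} - Q^{π_{k+1}} ≤ c` improves to `≤ γ c`, and for `γ < 1` this
forces the maximum of `Q^{π_k} - Q^{π_{k+1}}` to be nonpositive. -/

theorem nonpos_of_forall_le_mul_of_forall_le {X : Type*} [Finite X] {γ : ℝ} (hγ : γ < 1)
    {f : X → ℝ} (h : ∀ c, (∀ x, f x ≤ c) → ∀ x, f x ≤ γ * c) (x : X) : f x ≤ 0 := by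
  by_contra! hx
  have : Nonempty X := ⟨x⟩
  obtain ⟨m, hm⟩ := Finite.exists_max f
  have hfm : f m ≤ γ * f m := h (f m) hm m
  nlinarith [hm x]

section TBE

variable {St A : Type*} [Fintype St] [Fintype A] {q γ : ℝ} {P r : St → A → St → ℝ}

theorem TBE_le_TBE (hγ : 0 ≤ γ) (hP : ∀ s a s', 0 ≤ P s a s') {pol pol' F G : St → A → ℝ}
    (h : ∀ s, ∑ a, pol s a * F s a + Sq q (pol s) ≤ ∑ a, pol' s a * G s a + Sq q (pol' s)) :
    TBE q γ P r pol F ≤ TBE q γ P r pol' G := by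
  intro s a
  refine sum_le_sum fun s' _ => mul_le_mul_of_nonneg_left ?_ (hP s a s')
  gcongr r s a s' + γ * ?_
  simpa only [Sq, sum_add_distrib] using h s'

theorem TBE_mono (hγ : 0 ≤ γ) (hP : ∀ s a s', 0 ≤ P s a s') {pol F G : St → A → ℝ}
    (hpol : ∀ s a, 0 ≤ pol s a) (hFG : F ≤ G) :
    TBE q γ P r pol F ≤ TBE q γ P r pol G :=
  TBE_le_TBE hγ hP fun s => by
    gcongr with a
    exacts [hpol s a, hFG s a]

theorem TBE_add_const (hP : ∀ s a, ∑ s', P s a s' = 1) {pol : St → A → ℝ}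
    (hpol : ∀ s, ∑ a, pol s a = 1) (F : St → A → ℝ) (c : ℝ) :
    TBE q γ P r pol (fun s a => F s a + c) = fun s a => TBE q γ P r pol F s a + γ * c := by
  funext s a
  have hshift : ∀ s', ∑ a', (pol s' a' * (F s' a' + c) + entTerm q (pol s' a')) =
      ∑ a', (pol s' a' * F s' a' + entTerm q (pol s' a')) + c := fun s' => by
    simp only [mul_add, add_right_comm _ (pol s' _ * c), sum_add_distrib, ← sum_mul, hpol,
      one_mul]
  simp only [TBE, hshift]
  simp only [mul_add, sum_add_distrib, ← sum_mul, hP, one_mul]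
  ring

end TBE

theorem stmt19_general {St A : Type*} [Fintype St] [Fintype A]
    (q γ : ℝ) (hγ0 : 0 < γ) (hγ1 : γ < 1)
    (P : St → A → St → ℝ) (hP : ∀ s a, IsPmf (P s a))
    (r : St → A → St → ℝ)
    (pk pk1 : St → A → ℝ) (hpk : ∀ s, IsPmf (pk s)) (hpk1 : ∀ s, IsPmf (pk1 s))
    (Qk Qk1 : St → A → ℝ)
    (hQk : TBE q γ P r pk Qk = Qk)
    (hQk1 : TBE q γ P r pk1 Qk1 = Qk1)
    (himp : ∀ s, ∀ μ : A → ℝ, IsPmf μ →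
      (∑ a, μ a * Qk s a) + Sq q μ ≤ (∑ a, pk1 s a * Qk s a) + Sq q (pk1 s)) :
    ∀ s a, Qk s a ≤ Qk1 s a := by
  have hPnonneg : ∀ s a s', 0 ≤ P s a s' := fun s a => (hP s a).1
  have hsub : Qk ≤ TBE q γ P r pk1 Qk := calc
    Qk = TBE q γ P r pk Qk := hQk.symm
    _ ≤ TBE q γ P r pk1 Qk := TBE_le_TBE hγ0.le hPnonneg fun s => himp s (pk s) (hpk s)
  have hcontract : ∀ c, (∀ sa : St × A, Qk sa.1 sa.2 - Qk1 sa.1 sa.2 ≤ c) →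
      ∀ sa : St × A, Qk sa.1 sa.2 - Qk1 sa.1 sa.2 ≤ γ * c := by
    intro c hc ⟨s, a⟩
    have hshift : Qk ≤ fun s a => Qk1 s a + c := fun s a => by linarith [hc (s, a)]
    have hstep := (hsub.trans (TBE_mono hγ0.le hPnonneg (fun s => (hpk1 s).1) hshift)) s a
    rw [TBE_add_const (fun s a => (hP s a).2) (fun s => (hpk1 s).2), hQk1] at hstep
    linarith
  intro s a
  linarith [nonpos_of_forall_le_mul_of_forall_le hγ1 hcontract (s, a)]

theorem stmt19 {St A : Type*} [Fintype St] [Fintype A] [Nonempty St] [Nonempty A]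
    (q γ : ℝ) (hq : 0 < q) (hγ0 : 0 < γ) (hγ1 : γ < 1)
    (P : St → A → St → ℝ) (hP : ∀ s a, IsPmf (P s a))
    (r : St → A → St → ℝ)
    (pk pk1 : St → A → ℝ) (hpk : ∀ s, IsPmf (pk s)) (hpk1 : ∀ s, IsPmf (pk1 s))
    (Qk Qk1 : St → A → ℝ)
    (hQk : TBE q γ P r pk Qk = Qk)
    (hQk1 : TBE q γ P r pk1 Qk1 = Qk1)
    (himp : ∀ s, ∀ μ : A → ℝ, IsPmf μ →
      (∑ a, μ a * Qk s a) + Sq q μ ≤ (∑ a, pk1 s a * Qk s a) + Sq q (pk1 s)) :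
    ∀ s a, Qk s a ≤ Qk1 s a :=
  stmt19_general q γ hγ0 hγ1 P hP r pk pk1 hpk hpk1 Qk Qk1 hQk hQk1 himp
end
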